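/- arXiv:2308.11477 — 2 statements merged into one kernel-verified Lean document; each statement's English description precedes it below -/
import Mathlib

section
/- Let R be a finite set of rows, each row r ∈ R having a feature vector v_r : F → ℝ and a target t_r ∈ T, and let CP(p) for p ∈ DP_l denote the number of rows r ∈ R such that v_r follows p and t_r = t_p. Let σ choose σ(j) ∈ S_j for every internal node j and let τ assign a target τ(l) ∈ T to every leaf l. Define x_p = 1 for p ∈ DP_l exactly when s_p(j) = σ(j) for all j ∈ p_BT(l) and t_p = τ(l) (and x_p = 0 otherwise), and ρ_{j,a} = 1 exactly when a = σ(j). Then (x, ρ) is binary and satisfies constraints (alpha) and (gamma), and ∑_{leaves l} ∑_{p∈DP_l} CP(p) x_p equals the number of rows r ∈ R that are correctly classified by the decision tree (σ, τ), i.e., rows r whose unique leaf l reached under σ satisfies τ(l) = t_r. -/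
open Finset

attribute [local instance] Classical.propDecidable

/-- The decision paths for a leaf `l` (a Boolean string of length `k`) of the complete
binary tree of depth `k`: a split check, belonging to the candidate set `S j` of the
corresponding node `j = l.take i`, for every depth `i < k`, together with a target in `T`.
The split check assigned by `p` at the node `l.take i` is `p.1 i` and its target is `p.2`. -/
noncomputable def DP {F T : Type} [Fintype T] (k : ℕ) (S : List Bool → Finset (F × ℝ))
    (l : List Bool) : Finset ((Fin k → F × ℝ) × T) :=
  (Fintype.piFinset fun i : Fin k => S (l.take i.1)) ×ˢ (Finset.univ : Finset T)

/-- The leaves of the complete binary tree of depth `k`: Boolean strings of length `k`. -/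
noncomputable def Leaves (k : ℕ) : Finset (List Bool) :=
  (Finset.univ : Finset (Fin k → Bool)).image List.ofFn

/-- A feature vector `v` follows a decision path `p` for leaf `l`: at every depth `i < k`,
`v` takes the left branch on the split check `p.1 i` iff the bit of `l` following the node
`l.take i` is `false` (i.e. that node is a left child on the path to `l`). -/
def Follows {F T : Type} (k : ℕ) (v : F → ℝ) (l : List Bool)
    (p : (Fin k → F × ℝ) × T) : Prop :=
  ∀ i : Fin k, (v (p.1 i).1 ≤ (p.1 i).2 ↔ l.getD i.1 false = false)

/-- A feature vector `v` reaches the leaf `l` under the per-node assignment `σ` of split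
checks: for every proper prefix `l.take i` of `l`, the bit of `l` immediately following it
is `false` iff `v` takes the left branch on `σ (l.take i)`. -/
def ReachesLeaf {F : Type} (k : ℕ) (v : F → ℝ) (σ : List Bool → F × ℝ)
    (l : List Bool) : Prop :=
  l.length = k ∧ ∀ i : Fin k,
    (l.getD i.1 false = false ↔ v (σ (l.take i.1)).1 ≤ (σ (l.take i.1)).2)

/-- `CP(p)`: the number of rows `r ∈ R` that follow the path `p` (for leaf `l`) and whose
target coincides with the target of `p`. -/
noncomputable def CP {F T ι : Type} (k : ℕ) (R : Finset ι) (v : ι → F → ℝ) (t : ι → T)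
    (l : List Bool) (p : (Fin k → F × ℝ) × T) : ℕ :=
  (R.filter (fun r => Follows k (v r) l p ∧ t r = p.2)).card

/-!
The tree `(σ, τ)` selects at each leaf `l` the single decision path `treePath k σ τ l`, and `x l`
is the indicator of that path, so every sum `∑ p, f p * x l p` collapses to `f (treePath k σ τ l)`.
A row follows `treePath k σ τ l` exactly when it reaches `l` under `σ`; since the tree is
deterministic, the rows correctly classified at the different leaves are disjoint and together
are the correctly classified rows.
-/

section

variable {F T ι : Type} {k : ℕ}

theorem mem_Leaves {l : List Bool} : l ∈ Leaves k ↔ l.length = k := by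
  refine ⟨?_, fun hl => ?_⟩
  · simp only [Leaves, mem_image]
    rintro ⟨f, -, rfl⟩
    exact List.length_ofFn
  · subst hl
    exact mem_image.2 ⟨fun i => l[i], mem_univ _, List.ofFn_getElem⟩

theorem ReachesLeaf.eq {v : F → ℝ} {σ : List Bool → F × ℝ} {l l' : List Bool}
    (h : ReachesLeaf k v σ l) (h' : ReachesLeaf k v σ l') : l = l' := by
  obtain ⟨hl, hbit⟩ := h
  obtain ⟨hl', hbit'⟩ := h'
  -- the bit after a common prefix is decided by `σ` at that prefix
  have htake : ∀ n ≤ k, l.take n = l'.take n := by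
    intro n hn
    induction n with
    | zero => rfl
    | succ n ih =>
      have hprefix := ih (Nat.le_of_succ_le hn)
      have hnext : l[n] = l'[n] := by
        have := (hbit ⟨n, hn⟩).trans (hprefix ▸ (hbit' ⟨n, hn⟩).symm)
        rw [List.getD_eq_getElem _ _ (by omega), List.getD_eq_getElem _ _ (by omega)] at this
        simpa using this
      rw [← List.take_concat_get' l n (by omega), ← List.take_concat_get' l' n (by omega),
        hprefix, hnext]
  simpa [List.take_of_length_le, hl, hl'] using htake k le_rfl

def treePath (k : ℕ) (σ : List Bool → F × ℝ) (τ : List Bool → T) (l : List Bool) :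
    (Fin k → F × ℝ) × T :=
  (fun i => σ (l.take i), τ l)

variable {σ : List Bool → F × ℝ} {τ : List Bool → T} {l : List Bool}

theorem treePath_mem_DP [Fintype T] {S : List Bool → Finset (F × ℝ)}
    (hσ : ∀ j : List Bool, j.length < k → σ j ∈ S j) (hl : l.length = k) :
    treePath k σ τ l ∈ DP k S l :=
  mem_product.2 ⟨Fintype.mem_piFinset.2 fun i => hσ _ (by simp [hl]), mem_univ _⟩

theorem reachesLeaf_iff_follows_treePath {v : F → ℝ} (hl : l.length = k) :
    ReachesLeaf k v σ l ↔ Follows k v l (treePath k σ τ l) := by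
  simp only [ReachesLeaf, Follows, treePath, hl, true_and]
  exact forall_congr' fun _ => Iff.comm

theorem CP_treePath (R : Finset ι) (v : ι → F → ℝ) (t : ι → T) (hl : l.length = k) :
    CP k R v t l (treePath k σ τ l) = #{r ∈ R | ReachesLeaf k (v r) σ l ∧ τ l = t r} := by
  simp only [CP, reachesLeaf_iff_follows_treePath (τ := τ) hl, eq_comm (a := τ l)]
  rfl

theorem sum_card_filter_eq_card_filter_exists {α β : Type*} (s : Finset α) (R : Finset β)
    (P : α → β → Prop) [∀ a, DecidablePred (P a)] [DecidablePred fun r => ∃ a, P a r]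
    (hs : ∀ a r, P a r → a ∈ s) (huniq : ∀ a b r, P a r → P b r → a = b) :
    ∑ a ∈ s, #{r ∈ R | P a r} = #{r ∈ R | ∃ a, P a r} := by
  rw [← card_biUnion]
  · congr 1
    ext r
    simp only [mem_biUnion, mem_filter]
    exact ⟨fun ⟨a, _, hr, ha⟩ => ⟨hr, a, ha⟩, fun ⟨hr, a, ha⟩ => ⟨a, hs a r ha, hr, ha⟩⟩
  · intro a _ b _ hab
    exact disjoint_filter.2 fun r _ ha hb => hab (huniq a b r ha hb)

end

theorem stmt10_general {F T ι : Type} [Fintype T]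
    (k : ℕ)
    (S : List Bool → Finset (F × ℝ))
    (R : Finset ι) (v : ι → F → ℝ) (t : ι → T)
    (σ : List Bool → F × ℝ) (hσ : ∀ j : List Bool, j.length < k → σ j ∈ S j)
    (τ : List Bool → T)
    (x : List Bool → (Fin k → F × ℝ) × T → ℝ)
    (ρ : List Bool → F × ℝ → ℝ)
    (hx : ∀ (l : List Bool) (p : (Fin k → F × ℝ) × T),
      x l p = if (∀ i : Fin k, p.1 i = σ (l.take i.1)) ∧ p.2 = τ l then 1 else 0)
    (hρ : ∀ (j : List Bool) (a : F × ℝ), ρ j a = if a = σ j then 1 else 0) :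
    -- (x, ρ) is binary
    ((∀ l : List Bool, l.length = k → ∀ p ∈ DP k S l, x l p = 0 ∨ x l p = 1) ∧
     (∀ j : List Bool, j.length < k → ∀ a ∈ S j, ρ j a = 0 ∨ ρ j a = 1)) ∧
    -- constraints (alpha)
    (∀ l : List Bool, l.length = k → ∑ p ∈ DP k S l, x l p = 1) ∧
    -- constraints (gamma)
    (∀ l : List Bool, l.length = k → ∀ i : Fin k, ∀ a ∈ S (l.take i.1),
      ∑ p ∈ DP k S l, (if p.1 i = a then x l p else 0) = ρ (l.take i.1) a) ∧
    -- the objective value counts the correctly classified rows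
    (∑ l ∈ Leaves k, ∑ p ∈ DP k S l, (CP k R v t l p : ℝ) * x l p =
      ((R.filter (fun r => ∃ l : List Bool,
          ReachesLeaf k (v r) σ l ∧ τ l = t r)).card : ℝ)) := by
  have hx_boole : ∀ l p, x l p = if treePath k σ τ l = p then 1 else 0 := by
    intro l p
    simp only [hx, treePath, Prod.ext_iff, funext_iff, eq_comm]
  have hsum : ∀ l : List Bool, l.length = k → ∀ f : (Fin k → F × ℝ) × T → ℝ,
      ∑ p ∈ DP k S l, f p * x l p = f (treePath k σ τ l) := fun l hl f => by
    simp only [hx_boole, sum_mul_boole, if_pos (treePath_mem_DP hσ hl)]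
  refine ⟨⟨fun l _ p _ => ?_, fun j _ a _ => ?_⟩, fun l hl => ?_, fun l hl i a _ => ?_, ?_⟩
  · rw [hx_boole]; split_ifs <;> simp
  · rw [hρ]; split_ifs <;> simp
  · simpa using hsum l hl 1
  · rw [sum_congr rfl fun p _ => (boole_mul _ _).symm, hsum l hl, hρ]
    exact if_congr eq_comm rfl rfl
  · calc ∑ l ∈ Leaves k, ∑ p ∈ DP k S l, (CP k R v t l p : ℝ) * x l p
        = ∑ l ∈ Leaves k, (#{r ∈ R | ReachesLeaf k (v r) σ l ∧ τ l = t r} : ℝ) :=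
          sum_congr rfl fun l hl => by
            rw [hsum l (mem_Leaves.1 hl), CP_treePath R v t (mem_Leaves.1 hl)]
      _ = #{r ∈ R | ∃ l, ReachesLeaf k (v r) σ l ∧ τ l = t r} := by
          exact_mod_cast sum_card_filter_eq_card_filter_exists (Leaves k) R
            (fun l r => ReachesLeaf k (v r) σ l ∧ τ l = t r)
            (fun l r h => mem_Leaves.2 h.1.1) (fun l l' r h h' => h.1.eq h'.1)

/-- The solution of the integer master problem obtained from a decision tree `(σ, τ)`
(a split check `σ j ∈ S j` for every internal node and a target `τ l` for every leaf) —
`x_p = 1` exactly when `p`'s split checks agree with `σ` and `p`'s target is `τ l`, and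
`ρ_{j,a} = 1` exactly when `a = σ j` — is binary, satisfies constraints (alpha) and
(gamma), and its objective value `∑_l ∑_{p ∈ DP_l} CP(p) x_p` equals the number of rows
correctly classified by the decision tree `(σ, τ)`. -/
theorem stmt10 {F T ι : Type} [Fintype F] [Nonempty F] [Fintype T] [Nonempty T]
    (k : ℕ) (hk : 1 ≤ k)
    (S : List Bool → Finset (F × ℝ))
    (hS : ∀ j : List Bool, j.length < k → (S j).Nonempty)
    (R : Finset ι) (v : ι → F → ℝ) (t : ι → T)
    (σ : List Bool → F × ℝ) (hσ : ∀ j : List Bool, j.length < k → σ j ∈ S j)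
    (τ : List Bool → T)
    (x : List Bool → (Fin k → F × ℝ) × T → ℝ)
    (ρ : List Bool → F × ℝ → ℝ)
    (hx : ∀ (l : List Bool) (p : (Fin k → F × ℝ) × T),
      x l p = if (∀ i : Fin k, p.1 i = σ (l.take i.1)) ∧ p.2 = τ l then 1 else 0)
    (hρ : ∀ (j : List Bool) (a : F × ℝ), ρ j a = if a = σ j then 1 else 0) :
    -- (x, ρ) is binary
    ((∀ l : List Bool, l.length = k → ∀ p ∈ DP k S l, x l p = 0 ∨ x l p = 1) ∧
     (∀ j : List Bool, j.length < k → ∀ a ∈ S j, ρ j a = 0 ∨ ρ j a = 1)) ∧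
    -- constraints (alpha)
    (∀ l : List Bool, l.length = k → ∑ p ∈ DP k S l, x l p = 1) ∧
    -- constraints (gamma)
    (∀ l : List Bool, l.length = k → ∀ i : Fin k, ∀ a ∈ S (l.take i.1),
      ∑ p ∈ DP k S l, (if p.1 i = a then x l p else 0) = ρ (l.take i.1) a) ∧
    -- the objective value counts the correctly classified rows
    (∑ l ∈ Leaves k, ∑ p ∈ DP k S l, (CP k R v t l p : ℝ) * x l p =
      ((R.filter (fun r => ∃ l : List Bool,
          ReachesLeaf k (v r) σ l ∧ τ l = t r)).card : ℝ)) :=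
  stmt10_general k S R v t σ hσ τ x ρ hx hρ
end

section
/- Let R be a finite set of rows, each row r ∈ R having a feature vector v_r : F → ℝ and a target t_r ∈ T, and let CP(p) for p ∈ DP_l denote the number of rows r ∈ R such that v_r follows p and t_r = t_p. Suppose x_p ∈ {0,1} and ρ_{j,a} ∈ {0,1} satisfy constraints (alpha) and (gamma). For every leaf l let p_l be the unique path in DP_l with x_{p_l} = 1, define σ(j) as the unique split check with ρ_{j,σ(j)} = 1 for every internal node j, and define τ(l) = t_{p_l}. Then s_{p_l}(j) = σ(j) for every leaf l and every j ∈ p_BT(l), and the objective value ∑_{leaves l} ∑_{p∈DP_l} CP(p) x_p = ∑_{leaves l} CP(p_l) equals the number of rows r ∈ R correctly classified by the decision tree (σ, τ), i.e., rows r whose unique leaf l reached under σ satisfies τ(l) = t_r. -/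
open Finset

attribute [local instance] Classical.propDecidable

/-! A binary `x` that sums to one over `DP_l` is the indicator of `p_l`, so every `x`-weighted sum
over `DP_l` evaluates at `p_l`. Applied to (gamma) with `a = σ j`, this forces `s_{p_l}(j) = σ j`;
then following `p_l` is the same as reaching `l` under `σ`, and since a row reaches exactly one
leaf, the rows counted by the various `CP(p_l)` partition the correctly classified rows. -/

section WeightSelection

variable {ι M : Type*} {s : Finset ι} {w : ι → M} {a : ι}

lemma Finset.eq_zero_of_ne_of_sum_eq_apply [AddCommMonoid M] [PartialOrder M] [AddLeftMono M]
    [IsLeftCancelAdd M] (hw : ∀ i ∈ s, 0 ≤ w i) (ha : a ∈ s) (hsum : ∑ i ∈ s, w i = w a)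
    {b : ι} (hb : b ∈ s) (hba : b ≠ a) : w b = 0 := by
  rw [← add_sum_erase s w ha, add_eq_left] at hsum
  exact (sum_eq_zero_iff_of_nonneg fun i hi => hw i (mem_of_mem_erase hi)).1 hsum b
    (mem_erase.2 ⟨hba, hb⟩)

lemma Finset.sum_mul_eq_of_sum_eq_one [Semiring M] [PartialOrder M] [AddLeftMono M]
    [IsLeftCancelAdd M] (hw : ∀ i ∈ s, 0 ≤ w i) (ha : a ∈ s) (hsum : ∑ i ∈ s, w i = 1)
    (hwa : w a = 1) (f : ι → M) : ∑ i ∈ s, f i * w i = f a := by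
  rw [sum_eq_single_of_mem a ha fun b hb hba => by
    rw [eq_zero_of_ne_of_sum_eq_apply hw ha (hsum.trans hwa.symm) hb hba, mul_zero], hwa, mul_one]

end WeightSelection

lemma mem_Leaves_iff {k : ℕ} {l : List Bool} : l ∈ Leaves k ↔ l.length = k := by
  simp only [Leaves, mem_image, mem_univ, true_and]
  constructor
  · rintro ⟨f, rfl⟩
    exact List.length_ofFn
  · rintro rfl
    exact ⟨fun i => l[i.1], List.ofFn_getElem⟩

section DecisionTree

variable {F T : Type} {k : ℕ} {v : F → ℝ} {σ : List Bool → F × ℝ} {l l' : List Bool}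

lemma ReachesLeaf.take_eq (h : ReachesLeaf k v σ l) (h' : ReachesLeaf k v σ l') :
    ∀ n ≤ k, l.take n = l'.take n
  | 0, _ => by simp
  | n + 1, hn => by
    have ih := ReachesLeaf.take_eq h h' n (by omega)
    have hbit : l.getD n false = l'.getD n false := by
      have hl := h.2 ⟨n, hn⟩
      have hl' := h'.2 ⟨n, hn⟩
      rw [ih, ← hl'] at hl
      revert hl
      cases l.getD n false <;> cases l'.getD n false <;> simp
    have hlen : n < l.length := by rw [h.1]; omega
    have hlen' : n < l'.length := by rw [h'.1]; omega
    rw [List.getD_eq_getElem _ _ hlen, List.getD_eq_getElem _ _ hlen'] at hbit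
    rw [List.take_succ_eq_append_getElem hlen, List.take_succ_eq_append_getElem hlen', ih, hbit]

lemma ReachesLeaf.unique (h : ReachesLeaf k v σ l) (h' : ReachesLeaf k v σ l') : l = l' := by
  simpa only [List.take_of_length_le h.1.le, List.take_of_length_le h'.1.le] using
    h.take_eq h' k le_rfl

lemma follows_iff_reachesLeaf {p : (Fin k → F × ℝ) × T} (hl : l.length = k)
    (hp : ∀ i : Fin k, p.1 i = σ (l.take i.1)) : Follows k v l p ↔ ReachesLeaf k v σ l := by
  simp only [Follows, ReachesLeaf, hp, hl, true_and]
  exact forall_congr' fun _ => Iff.comm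

end DecisionTree

lemma Finset.card_filter_exists_eq_sum {ι α : Type*} (R : Finset ι) (L : Finset α)
    (P : ι → α → Prop) (hmem : ∀ r l, P r l → l ∈ L)
    (huniq : ∀ r l l', P r l → P r l' → l = l') :
    #(R.filter fun r => ∃ l, P r l) = ∑ l ∈ L, #(R.filter fun r => P r l) := by
  rw [← card_biUnion]
  · congr 1
    ext r
    simp only [mem_filter, mem_biUnion]
    exact ⟨fun ⟨hr, l, hl⟩ => ⟨l, hmem r l hl, hr, hl⟩, fun ⟨l, _, hr, hl⟩ => ⟨hr, l, hl⟩⟩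
  · intro l _ l' _ hne
    exact disjoint_left.2 fun r hr hr' =>
      hne (huniq r l l' (mem_filter.1 hr).2 (mem_filter.1 hr').2)

theorem stmt11_general {F T ι : Type} [Fintype T]
    (k : ℕ)
    (S : List Bool → Finset (F × ℝ))
    (R : Finset ι) (v : ι → F → ℝ) (t : ι → T)
    (x : List Bool → (Fin k → F × ℝ) × T → ℝ)
    (ρ : List Bool → F × ℝ → ℝ)
    -- x and ρ are binary
    (hxbin : ∀ l : List Bool, l.length = k → ∀ p ∈ DP k S l, x l p = 0 ∨ x l p = 1)
    -- constraints (alpha)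
    (halpha : ∀ l : List Bool, l.length = k → ∑ p ∈ DP k S l, x l p = 1)
    -- constraints (gamma)
    (hgamma : ∀ l : List Bool, l.length = k → ∀ i : Fin k, ∀ a ∈ S (l.take i.1),
      ∑ p ∈ DP k S l, (if p.1 i = a then x l p else 0) = ρ (l.take i.1) a)
    -- p_l is the path of DP_l selected by x
    (pl : List Bool → (Fin k → F × ℝ) × T)
    (hpl : ∀ l : List Bool, l.length = k → pl l ∈ DP k S l ∧ x l (pl l) = 1)
    -- σ j is the split check of S_j selected by ρ
    (σ : List Bool → F × ℝ)
    (hσ : ∀ j : List Bool, j.length < k → σ j ∈ S j ∧ ρ j (σ j) = 1)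
    -- τ l is the target of the selected path p_l
    (τ : List Bool → T)
    (hτ : ∀ l : List Bool, l.length = k → τ l = (pl l).2) :
    -- the selected paths agree with σ at every node
    (∀ l : List Bool, l.length = k → ∀ i : Fin k, (pl l).1 i = σ (l.take i.1)) ∧
    -- the objective value is ∑_l CP(p_l)
    (∑ l ∈ Leaves k, ∑ p ∈ DP k S l, (CP k R v t l p : ℝ) * x l p =
      ∑ l ∈ Leaves k, (CP k R v t l (pl l) : ℝ)) ∧
    -- and it counts the rows correctly classified by the decision tree (σ, τ)
    (∑ l ∈ Leaves k, (CP k R v t l (pl l) : ℝ) =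
      ((R.filter (fun r => ∃ l : List Bool,
          ReachesLeaf k (v r) σ l ∧ τ l = t r)).card : ℝ)) := by
  have hselect (l : List Bool) (hl : l.length = k) (f : (Fin k → F × ℝ) × T → ℝ) :
      ∑ p ∈ DP k S l, f p * x l p = f (pl l) :=
    sum_mul_eq_of_sum_eq_one (fun p hp => (hxbin l hl p hp).elim (·.ge) (· ▸ zero_le_one))
      (hpl l hl).1 (halpha l hl) (hpl l hl).2 f
  have hagree (l : List Bool) (hl : l.length = k) (i : Fin k) : (pl l).1 i = σ (l.take i.1) := by
    have hj : (l.take i.1).length < k := by simp [hl]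
    have h := hselect l hl fun p => if p.1 i = σ (l.take i.1) then 1 else 0
    simp only [boole_mul, hgamma l hl i _ (hσ _ hj).1, (hσ _ hj).2] at h
    exact of_not_not fun hne => by simp [hne] at h
  refine ⟨hagree, sum_congr rfl fun l hl => hselect l (mem_Leaves_iff.1 hl) _, ?_⟩
  rw [card_filter_exists_eq_sum R (Leaves k) _ (fun _ _ h => mem_Leaves_iff.2 h.1.1)
    (fun _ _ _ h h' => h.1.unique h'.1), Nat.cast_sum]
  refine sum_congr rfl fun l hl => ?_
  have hl := mem_Leaves_iff.1 hl
  simp only [CP, follows_iff_reachesLeaf hl (hagree l hl), hτ l hl, eq_comm]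

/-- Any binary solution `(x, ρ)` of constraints (alpha) and (gamma) encodes a decision
tree: letting `p_l` be the (unique) path of `DP_l` with `x_{p_l} = 1`, `σ j` the (unique)
split check with `ρ_{j, σ j} = 1`, and `τ l = t_{p_l}`, we have `s_{p_l}(j) = σ j` on
every node of the path to `l`, and the objective value `∑_l ∑_{p ∈ DP_l} CP(p) x_p`
equals `∑_l CP(p_l)`, which equals the number of rows correctly classified by the
decision tree `(σ, τ)`. -/
theorem stmt11 {F T ι : Type} [Fintype F] [Nonempty F] [Fintype T] [Nonempty T]
    (k : ℕ) (hk : 1 ≤ k)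
    (S : List Bool → Finset (F × ℝ))
    (hS : ∀ j : List Bool, j.length < k → (S j).Nonempty)
    (R : Finset ι) (v : ι → F → ℝ) (t : ι → T)
    (x : List Bool → (Fin k → F × ℝ) × T → ℝ)
    (ρ : List Bool → F × ℝ → ℝ)
    -- x and ρ are binary
    (hxbin : ∀ l : List Bool, l.length = k → ∀ p ∈ DP k S l, x l p = 0 ∨ x l p = 1)
    (hρbin : ∀ j : List Bool, j.length < k → ∀ a ∈ S j, ρ j a = 0 ∨ ρ j a = 1)
    -- constraints (alpha)
    (halpha : ∀ l : List Bool, l.length = k → ∑ p ∈ DP k S l, x l p = 1)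
    -- constraints (gamma)
    (hgamma : ∀ l : List Bool, l.length = k → ∀ i : Fin k, ∀ a ∈ S (l.take i.1),
      ∑ p ∈ DP k S l, (if p.1 i = a then x l p else 0) = ρ (l.take i.1) a)
    -- p_l is the path of DP_l selected by x
    (pl : List Bool → (Fin k → F × ℝ) × T)
    (hpl : ∀ l : List Bool, l.length = k → pl l ∈ DP k S l ∧ x l (pl l) = 1)
    -- σ j is the split check of S_j selected by ρ
    (σ : List Bool → F × ℝ)
    (hσ : ∀ j : List Bool, j.length < k → σ j ∈ S j ∧ ρ j (σ j) = 1)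
    -- τ l is the target of the selected path p_l
    (τ : List Bool → T)
    (hτ : ∀ l : List Bool, l.length = k → τ l = (pl l).2) :
    -- the selected paths agree with σ at every node
    (∀ l : List Bool, l.length = k → ∀ i : Fin k, (pl l).1 i = σ (l.take i.1)) ∧
    -- the objective value is ∑_l CP(p_l)
    (∑ l ∈ Leaves k, ∑ p ∈ DP k S l, (CP k R v t l p : ℝ) * x l p =
      ∑ l ∈ Leaves k, (CP k R v t l (pl l) : ℝ)) ∧
    -- and it counts the rows correctly classified by the decision tree (σ, τ)
    (∑ l ∈ Leaves k, (CP k R v t l (pl l) : ℝ) =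
      ((R.filter (fun r => ∃ l : List Bool,
          ReachesLeaf k (v r) σ l ∧ τ l = t r)).card : ℝ)) :=
  stmt11_general k S R v t x ρ hxbin halpha hgamma pl hpl σ hσ τ hτ
end
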